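/- arXiv:2012.12309 — 4 statements merged into one kernel-verified Lean document; each statement's English description precedes it below -/
import Mathlib

section
/- The influence function under the influence barricade model is not submodular: there exists an influence network (V, W, b) together with sets S₁ ⊆ S₂ ⊆ V and a node u ∈ V \ S₂ such that σ(S₁ ∪ {u}) − σ(S₁) < σ(S₂ ∪ {u}) − σ(S₂). -/
/-!
Influence barricade model: a finite vertex set `V : Finset ι`, edge weights
`W : ι → ι → ℝ` (an edge `u → v` exists iff `W u v > 0`), and barricade
factors `b : ι → ℝ`.  For a seed set `S ⊆ V`, the diffusion process is
`A 0 = S` and `A (t+1) = A t ∪ {u ∈ V : ∑ v ∈ A t, W v u ≥ b u}`.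
-/

open Finset

open Classical in
/-- One step of the diffusion process under the influence barricade model. -/
noncomputable def diffStep {ι : Type*} [DecidableEq ι] (V : Finset ι)
    (W : ι → ι → ℝ) (b : ι → ℝ) (A : Finset ι) : Finset ι :=
  A ∪ V.filter (fun u => b u ≤ ∑ v ∈ A, W v u)

/-- `activeSet V W b S t` is the set `A_t(S)` of nodes active at time `t`. -/
noncomputable def activeSet {ι : Type*} [DecidableEq ι] (V : Finset ι)
    (W : ι → ι → ℝ) (b : ι → ℝ) (S : Finset ι) : ℕ → Finset ι
  | 0 => S
  | t + 1 => diffStep V W b (activeSet V W b S t)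

/-- The final active set `A(S) = A_{|V|}(S)`. -/
noncomputable def finalActive {ι : Type*} [DecidableEq ι] (V : Finset ι)
    (W : ι → ι → ℝ) (b : ι → ℝ) (S : Finset ι) : Finset ι :=
  activeSet V W b S V.card

/-- `S` achieves full influenceability: every node is eventually active. -/
def FullInf {ι : Type*} [DecidableEq ι] (V : Finset ι) (W : ι → ι → ℝ)
    (b : ι → ℝ) (S : Finset ι) : Prop :=
  finalActive V W b S = V

/-- `σ(S)`: the number of nodes active at the end of the influence process. -/
noncomputable def sigmaInf {ι : Type*} [DecidableEq ι] (V : Finset ι)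
    (W : ι → ι → ℝ) (b : ι → ℝ) (S : Finset ι) : ℕ :=
  (finalActive V W b S).card

/-- The minimum seed number: the least cardinality of a seed set achieving
full influenceability. -/
noncomputable def minSeed {ι : Type*} [DecidableEq ι] (V : Finset ι)
    (W : ι → ι → ℝ) (b : ι → ℝ) : ℕ :=
  sInf {n | ∃ S : Finset ι, S ⊆ V ∧ S.card = n ∧ FullInf V W b S}

/-! A node with barricade 2 fed by two unit-weight edges behaves like an AND gate: neither
input alone activates it, both together do. On the three-node network `0 → 2 ← 1` with
barricades `1, 1, 2`, seeding node `1` alone activates nothing else, while seeding it on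
top of node `0` also activates node `2`, so the marginal gain of `1` grows from `1` to `2`. -/

section Diffusion

variable {ι : Type*} [DecidableEq ι] (V : Finset ι) (W : ι → ι → ℝ) (b : ι → ℝ)

theorem diffStep_eq_self_iff (A : Finset ι) :
    diffStep V W b A = A ↔ ∀ u ∈ V, b u ≤ ∑ v ∈ A, W v u → u ∈ A := by
  simp only [diffStep, union_eq_left, subset_iff, mem_filter, and_imp]

theorem diffStep_self : diffStep V W b V = V :=
  union_eq_left.2 (filter_subset _ _)

theorem activeSet_add (S : Finset ι) (k m : ℕ) :
    activeSet V W b S (k + m) = activeSet V W b (activeSet V W b S k) m := by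
  induction m with
  | zero => rfl
  | succ m ih => rw [← add_assoc, activeSet, ih, activeSet]

theorem activeSet_of_diffStep_eq_self {A : Finset ι} (hA : diffStep V W b A = A) (t : ℕ) :
    activeSet V W b A t = A := by
  induction t with
  | zero => rfl
  | succ t ih => rw [activeSet, ih, hA]

theorem finalActive_eq_of_activeSet_eq {S A : Finset ι} {k : ℕ} (hk : k ≤ V.card)
    (hSA : activeSet V W b S k = A) (hA : diffStep V W b A = A) :
    finalActive V W b S = A := by
  obtain ⟨m, hm⟩ := Nat.exists_eq_add_of_le hk
  rw [finalActive, hm, activeSet_add, hSA, activeSet_of_diffStep_eq_self V W b hA]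

theorem finalActive_eq_self {A : Finset ι} (hA : diffStep V W b A = A) :
    finalActive V W b A = A :=
  activeSet_of_diffStep_eq_self V W b hA _

end Diffusion

section AndGate

noncomputable def andGateWeight (v u : Fin 3) : ℝ := if u = 2 ∧ v ≠ 2 then 1 else 0

noncomputable def andGateBarricade (u : Fin 3) : ℝ := if u = 2 then 2 else 1

theorem andGateWeight_nonneg (v u : Fin 3) : 0 ≤ andGateWeight v u := by
  unfold andGateWeight; split_ifs <;> norm_num

theorem andGateBarricade_pos (u : Fin 3) : 0 < andGateBarricade u := by
  unfold andGateBarricade; split_ifs <;> norm_num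

theorem andGateWeight_lt_andGateBarricade (v u : Fin 3) :
    andGateWeight v u < andGateBarricade u := by
  unfold andGateWeight andGateBarricade; split_ifs <;> grind

local notation "σ" => sigmaInf univ andGateWeight andGateBarricade

theorem andGate_diffStep_empty : diffStep univ andGateWeight andGateBarricade ∅ = ∅ := by
  rw [diffStep_eq_self_iff]
  intro u _ hu
  exact absurd hu (by simpa using andGateBarricade_pos u)

theorem andGate_diffStep_singleton (i : Fin 3) :
    diffStep univ andGateWeight andGateBarricade {i} = {i} := by
  rw [diffStep_eq_self_iff]
  intro u _ hu
  rw [sum_singleton] at hu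
  exact absurd hu (andGateWeight_lt_andGateBarricade i u).not_ge

theorem andGate_diffStep_inputs :
    diffStep univ andGateWeight andGateBarricade {0, 1} = univ := by
  refine eq_univ_of_forall fun u => mem_union.2 ?_
  fin_cases u
  · exact .inl (by simp)
  · exact .inl (by simp)
  · refine .inr (mem_filter.2 ⟨mem_univ _, ?_⟩)
    rw [sum_pair (by decide)]
    simp [andGateWeight, andGateBarricade]; norm_num

theorem andGate_sigma_empty : σ ∅ = 0 := by
  rw [sigmaInf, finalActive_eq_self _ _ _ andGate_diffStep_empty, card_empty]

theorem andGate_sigma_singleton (i : Fin 3) : σ {i} = 1 := by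
  rw [sigmaInf, finalActive_eq_self _ _ _ (andGate_diffStep_singleton i), card_singleton]

theorem andGate_sigma_inputs : σ {0, 1} = 3 := by
  rw [sigmaInf, finalActive_eq_of_activeSet_eq _ _ _ (k := 1) (by simp) andGate_diffStep_inputs
    (diffStep_self _ _ _)]
  rfl

end AndGate

/-- the influence function `σ` under the influence barricade
model is not submodular. -/
theorem influence_not_submodular :
    ∃ (n : ℕ) (V : Finset (Fin n)) (W : Fin n → Fin n → ℝ) (b : Fin n → ℝ),
      (∀ u v, 0 ≤ W u v) ∧ (∀ u, 0 ≤ b u) ∧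
      ∃ (S₁ S₂ : Finset (Fin n)) (u : Fin n),
        S₁ ⊆ S₂ ∧ S₂ ⊆ V ∧ u ∈ V ∧ u ∉ S₂ ∧
        (sigmaInf V W b (S₁ ∪ {u}) : ℤ) - (sigmaInf V W b S₁ : ℤ) <
          (sigmaInf V W b (S₂ ∪ {u}) : ℤ) - (sigmaInf V W b S₂ : ℤ) := by
  refine ⟨3, univ, andGateWeight, andGateBarricade, andGateWeight_nonneg,
    fun u => (andGateBarricade_pos u).le, ∅, {0}, 1, empty_subset _, subset_univ _, mem_univ _,
    by decide, ?_⟩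
  rw [empty_union, show ({0} ∪ {1} : Finset (Fin 3)) = {0, 1} from rfl, andGate_sigma_empty,
    andGate_sigma_singleton 0, andGate_sigma_singleton 1,
    andGate_sigma_inputs]
  norm_num
end

section
/- Let G = (V, E) be a finite simple undirected graph, and form the influence network on V with W(u,v) = 1 if {u,v} ∈ E and W(u,v) = 0 otherwise, and with b(v) equal to the number of neighbors of v in G. Then a set S ⊆ V achieves full influenceability in this influence network if and only if S is a vertex cover of G (i.e., every edge of E has at least one endpoint in S). -/
/-!
Influence barricade model: a finite vertex set `V : Finset ι`, edge weights
`W : ι → ι → ℝ` (an edge `u → v` exists iff `W u v > 0`), and barricade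
factors `b : ι → ℝ`.  For a seed set `S ⊆ V`, the diffusion process is
`A 0 = S` and `A (t+1) = A t ∪ {u ∈ V : ∑ v ∈ A t, W v u ≥ b u}`.
-/

open Finset

/-!
In the network of a graph, with unit edge weights and degree barricades, a vertex becomes active
exactly when all of its neighbours are active. A vertex cover therefore activates every vertex in
one step. Conversely, the two endpoints of an edge outside `S` block each other forever: neither
ever sees all of its neighbours active.
-/

section Diffusion

variable {ι : Type*} [DecidableEq ι] {V : Finset ι} {W : ι → ι → ℝ} {b : ι → ℝ}

theorem subset_diffStep (A : Finset ι) : A ⊆ diffStep V W b A :=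
  subset_union_left

theorem diffStep_subset {A : Finset ι} (hA : A ⊆ V) : diffStep V W b A ⊆ V :=
  union_subset hA (filter_subset _ _)

theorem activeSet_subset {S : Finset ι} (hS : S ⊆ V) (t : ℕ) : activeSet V W b S t ⊆ V := by
  induction t with
  | zero => exact hS
  | succ t ih => exact diffStep_subset ih

theorem activeSet_mono (S : Finset ι) : Monotone (activeSet V W b S) :=
  monotone_nat_of_le_succ fun t => subset_diffStep (activeSet V W b S t)

theorem fullInf_of_diffStep_eq {S : Finset ι} (hS : S ⊆ V) (h : diffStep V W b S = V) :
    FullInf V W b S := by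
  unfold FullInf finalActive
  rcases Nat.eq_zero_or_pos V.card with hV | hV
  · rw [hV, card_eq_zero.mp hV]
    exact subset_empty.mp (card_eq_zero.mp hV ▸ hS)
  · refine (activeSet_subset hS _).antisymm ?_
    calc V = activeSet V W b S 1 := h.symm
      _ ⊆ activeSet V W b S V.card := activeSet_mono S hV

end Diffusion

section GraphNetwork

variable {α : Type*} [Fintype α] [DecidableEq α] (G : SimpleGraph α) [DecidableRel G.Adj]

def SimpleGraph.influenceWeight : α → α → ℝ := fun u v => if G.Adj u v then 1 else 0

def SimpleGraph.degreeBarricade : α → ℝ := fun v => G.degree v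

theorem SimpleGraph.sum_influenceWeight (A : Finset α) (u : α) :
    ∑ v ∈ A, G.influenceWeight v u = #(G.neighborFinset u ∩ A) := by
  unfold influenceWeight
  rw [sum_boole, inter_comm, ← filter_mem_eq_inter]
  simp only [mem_neighborFinset, adj_comm]

theorem SimpleGraph.mem_diffStep_iff {A : Finset α} {u : α} :
    u ∈ diffStep univ G.influenceWeight G.degreeBarricade A ↔ u ∈ A ∨ G.neighborFinset u ⊆ A := by
  have hcard : G.degree u ≤ #(G.neighborFinset u ∩ A) ↔ G.neighborFinset u ⊆ A := by
    rw [← inter_eq_left, ← card_neighborFinset_eq_degree]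
    exact ⟨fun h => eq_of_subset_of_card_le inter_subset_left h, fun h => by rw [h]⟩
  simp only [diffStep, mem_union, mem_filter, mem_univ, true_and, sum_influenceWeight,
    degreeBarricade, Nat.cast_le, hcard]

theorem SimpleGraph.notMem_activeSet_of_adj {S : Finset α} {u v : α} (huv : G.Adj u v)
    (hu : u ∉ S) (hv : v ∉ S) (t : ℕ) :
    u ∉ activeSet univ G.influenceWeight G.degreeBarricade S t ∧
      v ∉ activeSet univ G.influenceWeight G.degreeBarricade S t := by
  induction t with
  | zero => exact ⟨hu, hv⟩
  | succ t ih =>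
    obtain ⟨hu, hv⟩ := ih
    simp only [activeSet, mem_diffStep_iff, not_or, not_subset]
    exact ⟨⟨hu, v, (mem_neighborFinset G u v).mpr huv, hv⟩,
      ⟨hv, u, (mem_neighborFinset G v u).mpr huv.symm, hu⟩⟩

theorem SimpleGraph.diffStep_eq_univ_of_cover {S : Finset α}
    (hS : ∀ u v : α, G.Adj u v → u ∈ S ∨ v ∈ S) :
    diffStep univ G.influenceWeight G.degreeBarricade S = univ := by
  refine eq_univ_of_forall fun u => G.mem_diffStep_iff.mpr ?_
  by_cases hu : u ∈ S
  · exact Or.inl hu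
  · exact Or.inr fun v hv => (hS u v ((mem_neighborFinset G u v).mp hv)).resolve_left hu

end GraphNetwork

/-- in the influence network associated to a finite simple graph
`G` (weight `1` on each edge, barricade factor of `v` equal to the degree of
`v`), a set `S` achieves full influenceability iff `S` is a vertex cover. -/
theorem fullInf_iff_vertexCover {α : Type*} [Fintype α] [DecidableEq α]
    (G : SimpleGraph α) [DecidableRel G.Adj] (S : Finset α) :
    FullInf (Finset.univ : Finset α)
        (fun u v => if G.Adj u v then (1 : ℝ) else 0)
        (fun v => (G.degree v : ℝ)) S ↔
      ∀ u v : α, G.Adj u v → u ∈ S ∨ v ∈ S := by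
  change FullInf univ G.influenceWeight G.degreeBarricade S ↔ _
  refine ⟨fun hfull u v huv => ?_, fun hS => fullInf_of_diffStep_eq (subset_univ S)
    (G.diffStep_eq_univ_of_cover hS)⟩
  by_contra! hout
  have hu := (G.notMem_activeSet_of_adj huv hout.1 hout.2 (univ : Finset α).card).1
  exact hu ((Finset.ext_iff.mp hfull u).mpr (mem_univ u))
end

section
/- Adding a bidirectional pair of edges changes the minimum seed number by at most one: let (V, W, b) be an influence network and v₁ ≠ v₂ nodes with W(v₁,v₂) = W(v₂,v₁) = 0. Let W' agree with W everywhere except W'(v₁,v₂) = w₁ and W'(v₂,v₁) = w₂ for some w₁, w₂ > 0. If m and m' denote the minimum seed numbers of (V, W, b) and (V, W', b) respectively, then 0 ≤ m − m' ≤ 1. -/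
/-!
Influence barricade model: a finite vertex set `V : Finset ι`, edge weights
`W : ι → ι → ℝ` (an edge `u → v` exists iff `W u v > 0`), and barricade
factors `b : ι → ℝ`.  For a seed set `S ⊆ V`, the diffusion process is
`A 0 = S` and `A (t+1) = A t ∪ {u ∈ V : ∑ v ∈ A t, W v u ≥ b u}`.
-/

open Finset

/-!
Extra edges only help the diffusion, so `minSeed V W' b ≤ minSeed V W b`. Conversely, take an optimal
seed set `S` for `W'`, and let `x` be whichever of `v₁, v₂` the `W'`-process activates first and `y`
the other one. Then `x` is never activated through the new edge `y → x`, and the only other new edge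
points into `y`; so once `y` is seeded as well, the `W`-process dominates the `W'`-process step by
step, and `insert y S` is a fully influencing seed set for `W`.
-/

theorem Monotone.le_total_of_prop {α : Type*} [LinearOrder α] {p q : α → Prop}
    (hp : Monotone p) (hq : Monotone q) : p ≤ q ∨ q ≤ p := by
  by_contra! h
  obtain ⟨⟨s, hps, hqs⟩, ⟨t, hqt, hpt⟩⟩ :
      (∃ s, p s ∧ ¬q s) ∧ ∃ t, q t ∧ ¬p t := by
    simpa [Pi.le_def] using h
  rcases le_total s t with hst | hts
  · exact hpt (hp hst hps)
  · exact hqs (hq hts hqt)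

namespace InfluenceNetwork

variable {ι : Type*} [DecidableEq ι] {V : Finset ι} {W W' : ι → ι → ℝ} {b : ι → ℝ}

theorem subset_diffStep (A : Finset ι) : A ⊆ diffStep V W b A :=
  subset_union_left

theorem activeSet_monotone (S : Finset ι) : Monotone (activeSet V W b S) :=
  monotone_nat_of_le_succ fun _ => subset_diffStep _

theorem activeSet_subset {S : Finset ι} (hS : S ⊆ V) (t : ℕ) : activeSet V W b S t ⊆ V := by
  induction t with
  | zero => exact hS
  | succ t ih => exact union_subset ih (filter_subset _ _)

theorem fullInf_of_subset_finalActive {S : Finset ι} (hS : S ⊆ V)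
    (hV : V ⊆ finalActive V W b S) : FullInf V W b S :=
  (activeSet_subset hS _).antisymm hV

theorem fullInf_self : FullInf V W b V :=
  fullInf_of_subset_finalActive subset_rfl (activeSet_monotone V (Nat.zero_le _))

theorem exists_fullInf_card_eq_minSeed (V : Finset ι) (W : ι → ι → ℝ) (b : ι → ℝ) :
    ∃ S ⊆ V, S.card = minSeed V W b ∧ FullInf V W b S :=
  Nat.sInf_mem (s := {n | ∃ S ⊆ V, S.card = n ∧ FullInf V W b S})
    ⟨V.card, V, subset_rfl, rfl, fullInf_self⟩

theorem minSeed_le_card {S : Finset ι} (hS : S ⊆ V) (h : FullInf V W b S) :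
    minSeed V W b ≤ S.card :=
  Nat.sInf_le ⟨S, hS, rfl, h⟩

theorem activeSet_subset_activeSet_of_le (hW : ∀ u v, 0 ≤ W u v)
    (hle : ∀ u v, W u v ≤ W' u v) {S S' : Finset ι} (hS : S ⊆ S') (t : ℕ) :
    activeSet V W b S t ⊆ activeSet V W' b S' t := by
  induction t with
  | zero => exact hS
  | succ t ih =>
    refine union_subset_union ih fun u hu => ?_
    obtain ⟨huV, hsum⟩ := mem_filter.mp hu
    refine mem_filter.mpr ⟨huV, hsum.trans ?_⟩
    exact (sum_le_sum_of_subset_of_nonneg ih fun v _ _ => hW v u).trans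
      (sum_le_sum fun v _ => hle v u)

theorem minSeed_le_of_le (hW : ∀ u v, 0 ≤ W u v) (hle : ∀ u v, W u v ≤ W' u v) :
    minSeed V W' b ≤ minSeed V W b := by
  obtain ⟨S, hSV, hcard, hfull⟩ := exists_fullInf_card_eq_minSeed V W b
  refine hcard ▸ minSeed_le_card hSV (fullInf_of_subset_finalActive hSV ?_)
  exact hfull.symm.subset.trans (activeSet_subset_activeSet_of_le hW hle subset_rfl _)

theorem activeSet_subset_activeSet_insert (hW : ∀ u v, 0 ≤ W u v) {x y : ι}
    (hagree : ∀ v u, u ≠ y → ¬(v = y ∧ u = x) → W' v u = W v u) {S : Finset ι}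
    (hfirst : ∀ t, y ∈ activeSet V W' b S t → x ∈ activeSet V W' b S t) (t : ℕ) :
    activeSet V W' b S t ⊆ activeSet V W b (insert y S) t := by
  induction t with
  | zero => exact subset_insert y S
  | succ t ih =>
    intro u hu
    rcases mem_union.mp hu with hu | hu
    · exact subset_diffStep _ (ih hu)
    by_cases huy : u = y
    · exact activeSet_monotone _ (Nat.zero_le _) (huy ▸ mem_insert_self y S)
    by_cases hu' : u ∈ activeSet V W' b S t
    · exact subset_diffStep _ (ih hu')
    obtain ⟨huV, hsum⟩ := mem_filter.mp hu
    have hsum_eq : ∑ v ∈ activeSet V W' b S t, W' v u = ∑ v ∈ activeSet V W' b S t, W v u := by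
      refine sum_congr rfl fun v hv => hagree v u huy ?_
      rintro ⟨rfl, rfl⟩
      exact hu' (hfirst t hv)
    refine mem_union_right _ (mem_filter.mpr ⟨huV, hsum.trans ?_⟩)
    exact hsum_eq ▸ sum_le_sum_of_subset_of_nonneg ih fun v _ _ => hW v u

theorem fullInf_insert_of_activated_first (hW : ∀ u v, 0 ≤ W u v) {x y : ι} (hy : y ∈ V)
    (hagree : ∀ v u, u ≠ y → ¬(v = y ∧ u = x) → W' v u = W v u) {S : Finset ι} (hS : S ⊆ V)
    (hfull : FullInf V W' b S)
    (hfirst : ∀ t, y ∈ activeSet V W' b S t → x ∈ activeSet V W' b S t) :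
    FullInf V W b (insert y S) :=
  fullInf_of_subset_finalActive (insert_subset hy hS)
    (hfull.symm.subset.trans (activeSet_subset_activeSet_insert hW hagree hfirst _))

end InfluenceNetwork

open InfluenceNetwork in
theorem minSeed_add_bidirectional_edges_general {ι : Type*} [DecidableEq ι]
    (V : Finset ι) (W W' : ι → ι → ℝ) (b : ι → ℝ)
    (hW : ∀ u v, 0 ≤ W u v)
    (v₁ v₂ : ι) (hv₁ : v₁ ∈ V) (hv₂ : v₂ ∈ V)
    (h₁ : W v₁ v₂ = 0) (h₂ : W v₂ v₁ = 0)
    (w₁ w₂ : ℝ) (hw₁ : 0 < w₁) (hw₂ : 0 < w₂)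
    (hW'₁ : W' v₁ v₂ = w₁) (hW'₂ : W' v₂ v₁ = w₂)
    (hagree : ∀ a c : ι, ¬(a = v₁ ∧ c = v₂) → ¬(a = v₂ ∧ c = v₁) →
      W' a c = W a c) :
    minSeed V W' b ≤ minSeed V W b ∧
      minSeed V W b ≤ minSeed V W' b + 1 := by
  have hle : ∀ u v, W u v ≤ W' u v := by
    intro u v
    by_cases e₁ : u = v₁ ∧ v = v₂
    · rw [e₁.1, e₁.2, h₁, hW'₁]; exact hw₁.le
    by_cases e₂ : u = v₂ ∧ v = v₁
    · rw [e₂.1, e₂.2, h₂, hW'₂]; exact hw₂.le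
    · exact (hagree u v e₁ e₂).ge
  refine ⟨minSeed_le_of_le hW hle, ?_⟩
  obtain ⟨S, hSV, hcard, hfull⟩ := exists_fullInf_card_eq_minSeed V W' b
  have hmono : ∀ v, Monotone fun t => v ∈ activeSet V W' b S t :=
    fun _ _ _ hst hv => activeSet_monotone S hst hv
  obtain ⟨y, hy, hfull'⟩ : ∃ y ∈ V, FullInf V W b (insert y S) := by
    rcases (hmono v₁).le_total_of_prop (hmono v₂) with h | h
    · exact ⟨v₁, hv₁, fullInf_insert_of_activated_first hW hv₁
        (fun v u hu hvu => hagree v u hvu fun e => hu e.2) hSV hfull h⟩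
    · exact ⟨v₂, hv₂, fullInf_insert_of_activated_first hW hv₂
        (fun v u hu hvu => hagree v u (fun e => hu e.2) hvu) hSV hfull h⟩
  calc minSeed V W b ≤ (insert y S).card := minSeed_le_card (insert_subset hy hSV) hfull'
    _ ≤ S.card + 1 := card_insert_le y S
    _ = minSeed V W' b + 1 := by rw [hcard]

/-- adding a bidirectional pair of edges (between two previously
non-adjacent nodes) decreases the minimum seed number by at most one. -/
theorem minSeed_add_bidirectional_edges {ι : Type*} [DecidableEq ι]
    (V : Finset ι) (W W' : ι → ι → ℝ) (b : ι → ℝ)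
    (hW : ∀ u v, 0 ≤ W u v) (hb : ∀ u, 0 ≤ b u)
    (v₁ v₂ : ι) (hv₁ : v₁ ∈ V) (hv₂ : v₂ ∈ V) (hne : v₁ ≠ v₂)
    (h₁ : W v₁ v₂ = 0) (h₂ : W v₂ v₁ = 0)
    (w₁ w₂ : ℝ) (hw₁ : 0 < w₁) (hw₂ : 0 < w₂)
    (hW'₁ : W' v₁ v₂ = w₁) (hW'₂ : W' v₂ v₁ = w₂)
    (hagree : ∀ a c : ι, ¬(a = v₁ ∧ c = v₂) → ¬(a = v₂ ∧ c = v₁) →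
      W' a c = W a c) :
    minSeed V W' b ≤ minSeed V W b ∧
      minSeed V W b ≤ minSeed V W' b + 1 :=
  minSeed_add_bidirectional_edges_general V W W' b hW v₁ v₂ hv₁ hv₂ h₁ h₂ w₁ w₂ hw₁ hw₂ hW'₁ hW'₂
    hagree
end

section
/- Correctness of the node-removal seed selection (MSS): let (V, W, b) be an influence network and let v₁, v₂, …, v_m be distinct nodes of V such that for every i ∈ {1, …, m}, b(v_i) ≤ ∑_{z ∈ V \ {v₁, …, v_i}} W(z, v_i). Then the set S = V \ {v₁, …, v_m} of remaining nodes achieves full influenceability. -/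
/-!
Influence barricade model: a finite vertex set `V : Finset ι`, edge weights
`W : ι → ι → ℝ` (an edge `u → v` exists iff `W u v > 0`), and barricade
factors `b : ι → ℝ`.  For a seed set `S ⊆ V`, the diffusion process is
`A 0 = S` and `A (t+1) = A t ∪ {u ∈ V : ∑ v ∈ A t, W v u ≥ b u}`.
-/

open Finset

/-!
Reverse the removal order: at time `k` every node not among the first `m - k` removed ones is
active, because the next node to be put back has, by its removal condition, enough incoming
weight from nodes that are already active. The process is inflationary inside the finite set `V`,
so it has stabilised by time `|V|`, and every node active at some time is in the final active set.
-/

theorem Finset.iterate_subset_iterate_card {α : Type*} (f : Finset α → Finset α)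
    (hf : ∀ A, A ⊆ f A) {V S : Finset α} (hV : ∀ t, f^[t] S ⊆ V) (t : ℕ) :
    f^[t] S ⊆ f^[V.card] S := by
  have mono : Monotone fun t => f^[t] S := monotone_nat_of_le_succ fun t => by
    rw [Function.iterate_succ_apply']; exact hf _
  obtain ⟨k, hk, hfix⟩ : ∃ k ≤ V.card, f (f^[k] S) = f^[k] S := by
    by_contra! hne
    have hgrow : ∀ k ≤ V.card + 1, k ≤ (f^[k] S).card := by
      intro k
      induction k with
      | zero => simp
      | succ k ih =>
        intro hk
        rw [Function.iterate_succ_apply']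
        exact (ih (by omega)).trans_lt
          (card_lt_card ((hf _).ssubset_of_ne (hne k (by omega)).symm))
    have := (hgrow _ le_rfl).trans (card_le_card (hV _))
    omega
  have stable : ∀ j ≥ k, f^[j] S = f^[k] S := fun j hj => by
    obtain ⟨d, rfl⟩ := Nat.exists_eq_add_of_le hj
    rw [add_comm, Function.iterate_add_apply, Function.iterate_fixed hfix]
  rcases le_total t V.card with h | h
  · exact mono h
  · rw [stable t (hk.trans h), stable _ hk]

section Diffusion

variable {ι : Type*} [DecidableEq ι] {V : Finset ι} {W : ι → ι → ℝ} {b : ι → ℝ}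

theorem mem_diffStep_of_le_sum (hW : ∀ u w, 0 ≤ W u w) {A T : Finset ι} {u : ι} (hu : u ∈ V)
    (hT : T ⊆ A) (h : b u ≤ ∑ z ∈ T, W z u) : u ∈ diffStep V W b A :=
  mem_union_right _ <| mem_filter.mpr
    ⟨hu, h.trans (sum_le_sum_of_subset_of_nonneg hT fun z _ _ => hW z u)⟩

theorem activeSet_eq_iterate (S : Finset ι) (t : ℕ) :
    activeSet V W b S t = (diffStep V W b)^[t] S := by
  induction t with
  | zero => rfl
  | succ t ih => rw [Function.iterate_succ_apply', ← ih]; rfl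

theorem activeSet_subset_finalActive {S : Finset ι} (hS : S ⊆ V) (t : ℕ) :
    activeSet V W b S t ⊆ finalActive V W b S := by
  rw [finalActive, activeSet_eq_iterate, activeSet_eq_iterate]
  exact Finset.iterate_subset_iterate_card _ subset_diffStep
    (fun t => activeSet_eq_iterate S t ▸ activeSet_subset hS t) t

end Diffusion

section Removal

variable {ι : Type*} [DecidableEq ι] {m : ℕ}

def removedPrefix (v : Fin m → ι) (n : ℕ) : Finset ι :=
  (univ.filter fun j : Fin m => (j : ℕ) < n).image v

theorem removedPrefix_zero (v : Fin m → ι) : removedPrefix v 0 = ∅ := by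
  simp [removedPrefix]

theorem removedPrefix_self (v : Fin m → ι) : removedPrefix v m = univ.image v := by
  simp [removedPrefix]

theorem removedPrefix_succ (v : Fin m → ι) (i : Fin m) :
    removedPrefix v (i + 1 : ℕ) = (univ.filter fun j : Fin m => j ≤ i).image v := by
  unfold removedPrefix
  congr 1
  ext j
  simp only [mem_filter, mem_univ, true_and, Nat.lt_succ_iff, Fin.le_def]

theorem removedPrefix_succ_eq_insert (v : Fin m → ι) (i : Fin m) :
    removedPrefix v (i + 1 : ℕ) = insert (v i) (removedPrefix v i) := by
  ext u
  simp only [removedPrefix, mem_image, mem_filter, mem_univ, true_and, mem_insert]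
  constructor
  · rintro ⟨j, hj, rfl⟩
    rcases Nat.lt_succ_iff_lt_or_eq.mp hj with hj | hj
    · exact .inr ⟨j, hj, rfl⟩
    · exact .inl (congrArg v (Fin.ext hj))
  · rintro (rfl | ⟨j, hj, rfl⟩)
    · exact ⟨i, Nat.lt_succ_self _, rfl⟩
    · exact ⟨j, Nat.lt_succ_of_lt hj, rfl⟩

theorem sdiff_removedPrefix_subset_activeSet {V : Finset ι} {W : ι → ι → ℝ} {b : ι → ℝ}
    (hW : ∀ u w, 0 ≤ W u w) {v : Fin m → ι}
    (hcond : ∀ i : Fin m,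
      b (v i) ≤ ∑ z ∈ V \ ((univ.filter fun j : Fin m => j ≤ i).image v), W z (v i)) :
    ∀ k n, k + n = m → V \ removedPrefix v n ⊆ activeSet V W b (V \ univ.image v) k
  | 0, n, h => by
    rw [zero_add] at h
    subst h
    rw [removedPrefix_self]
    rfl
  | k + 1, n, h => by
    have hn : n < m := by omega
    have ih := sdiff_removedPrefix_subset_activeSet hW hcond k (n + 1) (by omega)
    intro u hu
    obtain ⟨huV, hun⟩ := mem_sdiff.mp hu
    by_cases hu' : u ∈ removedPrefix v (n + 1)
    · have hvu : u = v ⟨n, hn⟩ := by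
        rw [removedPrefix_succ_eq_insert v ⟨n, hn⟩] at hu'
        exact (mem_insert.mp hu').resolve_right hun
      subst hvu
      have hthreshold := hcond ⟨n, hn⟩
      rw [← removedPrefix_succ v ⟨n, hn⟩] at hthreshold
      exact mem_diffStep_of_le_sum hW huV ih hthreshold
    · exact subset_diffStep _ (ih (mem_sdiff.mpr ⟨huV, hu'⟩))

end Removal

theorem mss_correct_general {ι : Type*} [DecidableEq ι]
    (V : Finset ι) (W : ι → ι → ℝ) (b : ι → ℝ)
    (hW : ∀ u w, 0 ≤ W u w)
    (m : ℕ) (v : Fin m → ι)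
    (hcond : ∀ i : Fin m,
      b (v i) ≤
        ∑ z ∈ V \ ((Finset.univ.filter (fun j : Fin m => j ≤ i)).image v),
          W z (v i)) :
    FullInf V W b (V \ Finset.univ.image v) := by
  have hS : V \ univ.image v ⊆ V := sdiff_subset
  refine Finset.Subset.antisymm (activeSet_subset hS _) ?_
  have hVm := sdiff_removedPrefix_subset_activeSet hW hcond m 0 (add_zero m)
  rw [removedPrefix_zero, sdiff_empty] at hVm
  exact hVm.trans (activeSet_subset_finalActive hS m)

/-- correctness of the node-removal seed selection (MSS): if
distinct nodes `v 0, v 1, …, v (m-1)` of `V` are removed one at a time and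
each removed node `v i` satisfies
`b (v i) ≤ ∑_{z ∈ V \ {v 0, …, v i}} W z (v i)`, then the remaining nodes
form a seed set achieving full influenceability. -/
theorem mss_correct {ι : Type*} [DecidableEq ι]
    (V : Finset ι) (W : ι → ι → ℝ) (b : ι → ℝ)
    (hW : ∀ u w, 0 ≤ W u w) (hb : ∀ u, 0 ≤ b u)
    (m : ℕ) (v : Fin m → ι)
    (hinj : Function.Injective v) (hmem : ∀ i, v i ∈ V)
    (hcond : ∀ i : Fin m,
      b (v i) ≤
        ∑ z ∈ V \ ((Finset.univ.filter (fun j : Fin m => j ≤ i)).image v),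
          W z (v i)) :
    FullInf V W b (V \ Finset.univ.image v) :=
  mss_correct_general V W b hW m v hcond
end
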